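/- arXiv:1407.5711 — 2 statements merged into one kernel-verified Lean document; each statement's English description precedes it below -/
import Mathlib

section
/- Under the assumptions of the previous Gram-matrix eigenvalue bound, if 1 − (d−1)ν − (K−1)d·μ_B > 0 then B_Sᴴ B_S is invertible and ‖(B_Sᴴ B_S)^{-1}‖ ≤ 1 / (1 − (d−1)ν − (K−1)d·μ_B), where ‖·‖ is the spectral norm. -/
/-!
Write `G = B_Sᴴ B_S` and split `x` into its blocks `x_k`. In `Re (xᴴ G x)` each diagonal block
contributes at least `(1 - (d-1)ν) ‖x_k‖²` (unit diagonal, off-diagonal entries at most `ν`), and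
each off-diagonal block at least `-d μ_B ‖x_k‖ ‖x_k'‖`. Since `∑_{k ≠ k'} a_k a_k' ≤ (K-1) ∑ a_k²`
by Cauchy–Schwarz, `Re (xᴴ G x) ≥ c ‖x‖²` with `c` the constant of the statement. This coercivity
gives `‖G x‖ ≥ c ‖x‖`, so `G` is injective, hence invertible, and `‖G⁻¹‖ ≤ 1 / c`.
-/

open Matrix Finset

/-- Spectral norm (largest singular value) of a complex matrix. -/
noncomputable def specNorm {α β : Type*} [Fintype α] [Fintype β] [DecidableEq β]
    (A : Matrix α β ℂ) : ℝ :=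
  ‖(Matrix.toEuclideanLin A).toContinuousLinearMap‖

/-- Euclidean norm of a complex vector. -/
noncomputable def vnorm {α : Type*} [Fintype α] (v : α → ℂ) : ℝ :=
  Real.sqrt (∑ i, Complex.normSq (v i))

/-- The `n`-th block (of `d` consecutive columns) of a block matrix. -/
def blk {m N d : ℕ} (B : Matrix (Fin m) (Fin N × Fin d) ℂ) (n : Fin N) :
    Matrix (Fin m) (Fin d) ℂ := Matrix.of fun r c => B r (n, c)

/-- Submatrix obtained by concatenating the blocks indexed by `S`. -/
def subMat {m N d K : ℕ} (B : Matrix (Fin m) (Fin N × Fin d) ℂ) (S : Fin K → Fin N) :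
    Matrix (Fin m) (Fin K × Fin d) ℂ := Matrix.of fun r c => B r (S c.1, c.2)

section OffDiagonalSums

variable {ι : Type*} [Fintype ι] [DecidableEq ι]

theorem sum_sum_erase_mul_le (a : ι → ℝ) :
    ∑ i, ∑ j ∈ univ.erase i, a i * a j ≤ (Fintype.card ι - 1 : ℝ) * ∑ i, a i ^ 2 := by
  have hsplit : (∑ i, a i) ^ 2 = ∑ i, a i ^ 2 + ∑ i, ∑ j ∈ univ.erase i, a i * a j := by
    rw [sq, sum_mul_sum, ← sum_add_distrib]
    exact sum_congr rfl fun i _ => by rw [sq, add_sum_erase _ (fun j => a i * a j) (mem_univ i)]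
  have hcs : (∑ i, a i) ^ 2 ≤ Fintype.card ι * ∑ i, a i ^ 2 := by
    simpa using sq_sum_le_card_mul_sum_sq (s := univ) (f := a)
  linarith

theorem sum_sum_erase_weighted_mul_le {w : ι → ι → ℝ} {ν : ℝ}
    (hw₀ : ∀ i j, i ≠ j → 0 ≤ w i j) (hw : ∀ i j, i ≠ j → w i j ≤ ν)
    {a : ι → ℝ} (ha : ∀ i, 0 ≤ a i) :
    ∑ i, ∑ j ∈ univ.erase i, w i j * (a i * a j) ≤
      (Fintype.card ι - 1 : ℝ) * ν * ∑ i, a i ^ 2 := by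
  rcases subsingleton_or_nontrivial ι with hι | hι
  · have hcard : (Fintype.card ι - 1 : ℝ) * ∑ i, a i ^ 2 = 0 := by
      rcases isEmpty_or_nonempty ι with _ | _
      · simp
      · have : Fintype.card ι = 1 :=
          le_antisymm (Fintype.card_le_one_iff_subsingleton.mpr hι) Fintype.card_pos
        simp [this]
    have hempty : ∀ i : ι, univ.erase i = ∅ := fun i =>
      eq_empty_of_forall_notMem fun j hj => ne_of_mem_erase hj (Subsingleton.elim _ _)
    simp [hempty, mul_right_comm _ ν, hcard]
  · obtain ⟨i, j, hij⟩ := exists_pair_ne ι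
    have hν : 0 ≤ ν := (hw₀ i j hij).trans (hw i j hij)
    calc ∑ i, ∑ j ∈ univ.erase i, w i j * (a i * a j)
        ≤ ∑ i, ∑ j ∈ univ.erase i, ν * (a i * a j) := by
          gcongr with i _ j hj
          · exact mul_nonneg (ha i) (ha j)
          · exact hw i j (ne_of_mem_erase hj).symm
      _ = ν * ∑ i, ∑ j ∈ univ.erase i, a i * a j := by simp_rw [mul_sum]
      _ ≤ ν * ((Fintype.card ι - 1 : ℝ) * ∑ i, a i ^ 2) := by
          gcongr; exact sum_sum_erase_mul_le a
      _ = _ := by ring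

theorem sum_re_sub_le_re_sum_sum (f : ι → ι → ℂ) {w : ι → ι → ℝ} {ν : ℝ}
    (hw₀ : ∀ i j, i ≠ j → 0 ≤ w i j) (hw : ∀ i j, i ≠ j → w i j ≤ ν)
    {a : ι → ℝ} (ha : ∀ i, 0 ≤ a i) (hf : ∀ i j, i ≠ j → ‖f i j‖ ≤ w i j * (a i * a j)) :
    ∑ i, (f i i).re - (Fintype.card ι - 1 : ℝ) * ν * ∑ i, a i ^ 2 ≤ (∑ i, ∑ j, f i j).re := by
  have hoff : -∑ i, ∑ j ∈ univ.erase i, w i j * (a i * a j) ≤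
      ∑ i, ∑ j ∈ univ.erase i, (f i j).re := by
    simp_rw [← sum_neg_distrib]
    gcongr with i _ j hj
    have hij : i ≠ j := (ne_of_mem_erase hj).symm
    linarith [neg_abs_le (f i j).re, Complex.abs_re_le_norm (f i j), hf i j hij]
  have hsplit : (∑ i, ∑ j, f i j).re =
      ∑ i, (f i i).re + ∑ i, ∑ j ∈ univ.erase i, (f i j).re := by
    simp_rw [Complex.re_sum, ← sum_add_distrib]
    exact sum_congr rfl fun i _ => (add_sum_erase _ (fun j => (f i j).re) (mem_univ i)).symm
  linarith [sum_sum_erase_weighted_mul_le hw₀ hw ha]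

theorem le_re_star_dotProduct_mulVec_of_diag_eq_one {M : Matrix ι ι ℂ} {ν : ℝ}
    (hdiag : ∀ i, M i i = 1) (hoff : ∀ i j, i ≠ j → ‖M i j‖ ≤ ν) (x : ι → ℂ) :
    (1 - (Fintype.card ι - 1 : ℝ) * ν) * ∑ i, Complex.normSq (x i) ≤
      (star x ⬝ᵥ (M *ᵥ x)).re := by
  have key := sum_re_sub_le_re_sum_sum (fun i j => star (x i) * (M i j * x j))
    (w := fun i j => ‖M i j‖) (fun _ _ _ => norm_nonneg _) hoff (a := fun i => ‖x i‖)
    (fun _ => norm_nonneg _) fun i j _ => by rw [norm_mul, norm_mul, norm_star]; linarith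
  simp only [hdiag, one_mul, Complex.star_def, ← Complex.normSq_eq_conj_mul_self,
    Complex.ofReal_re, ← Complex.normSq_eq_norm_sq] at key
  have hexpand : star x ⬝ᵥ (M *ᵥ x) = ∑ i, ∑ j, star (x i) * (M i j * x j) := by
    simp only [dotProduct, mulVec, mul_sum, Pi.star_apply]
  rw [hexpand]
  simp only [Complex.star_def]
  linarith

end OffDiagonalSums

theorem dotProduct_mulVec_prod {α κ κ' ι ι' : Type*} [NonUnitalNonAssocSemiring α]
    [Fintype κ] [Fintype κ'] [Fintype ι] [Fintype ι'] (A : Matrix (κ × ι) (κ' × ι') α)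
    (u : κ × ι → α) (v : κ' × ι' → α) :
    u ⬝ᵥ (A *ᵥ v) = ∑ k, ∑ k', Function.curry u k ⬝ᵥ
      (of (fun i j => A (k, i) (k', j)) *ᵥ Function.curry v k') := by
  simp only [dotProduct, mulVec, of_apply, Function.curry_apply, mul_sum, Fintype.sum_prod_type]
  exact sum_congr rfl fun _ _ => sum_comm

theorem vnorm_sq {ι : Type*} [Fintype ι] (x : ι → ℂ) : vnorm x ^ 2 = ∑ i, Complex.normSq (x i) :=
  Real.sq_sqrt (sum_nonneg fun _ _ => Complex.normSq_nonneg _)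

theorem norm_toLp_eq_vnorm {ι : Type*} [Fintype ι] (x : ι → ℂ) :
    ‖(WithLp.toLp 2 x : EuclideanSpace ℂ ι)‖ = vnorm x := by
  simp [EuclideanSpace.norm_eq, vnorm, Complex.normSq_eq_norm_sq]

theorem norm_star_dotProduct_mulVec_le {α β : Type*} [Fintype α] [Fintype β] [DecidableEq β]
    (M : Matrix α β ℂ) (u : α → ℂ) (v : β → ℂ) :
    ‖star u ⬝ᵥ (M *ᵥ v)‖ ≤ specNorm M * (vnorm u * vnorm v) := by
  have hinner : star u ⬝ᵥ (M *ᵥ v) =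
      inner ℂ (WithLp.toLp 2 u) ((toEuclideanLin M).toContinuousLinearMap (WithLp.toLp 2 v)) := by
    rw [dotProduct_comm]; rfl
  rw [hinner, ← norm_toLp_eq_vnorm, ← norm_toLp_eq_vnorm]
  calc _ ≤ ‖(WithLp.toLp 2 u : EuclideanSpace ℂ α)‖ *
        ‖(toEuclideanLin M).toContinuousLinearMap (WithLp.toLp 2 v)‖ := norm_inner_le_norm _ _
    _ ≤ _ := by
        rw [mul_left_comm]
        gcongr
        exact ContinuousLinearMap.le_opNorm _ _

theorem mul_norm_le_norm_apply_of_coercive {𝕜 E : Type*} [RCLike 𝕜] [NormedAddCommGroup E]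
    [InnerProductSpace 𝕜 E] (T : E →ₗ[𝕜] E) {c : ℝ}
    (h : ∀ y, c * ‖y‖ ^ 2 ≤ RCLike.re (inner 𝕜 y (T y))) (y : E) : c * ‖y‖ ≤ ‖T y‖ := by
  rcases eq_or_ne y 0 with rfl | hy
  · simp
  have hy : 0 < ‖y‖ := norm_pos_iff.mpr hy
  have : c * ‖y‖ ^ 2 ≤ ‖y‖ * ‖T y‖ :=
    (h y).trans ((RCLike.re_le_norm _).trans (norm_inner_le_norm _ _))
  nlinarith

theorem isUnit_and_specNorm_inv_le_of_coercive {ι : Type*} [Fintype ι] [DecidableEq ι]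
    (A : Matrix ι ι ℂ) {c : ℝ} (hc : 0 < c)
    (h : ∀ x, c * ∑ i, Complex.normSq (x i) ≤ (star x ⬝ᵥ (A *ᵥ x)).re) :
    IsUnit A ∧ specNorm A⁻¹ ≤ 1 / c := by
  have hlow : ∀ y, c * ‖y‖ ≤ ‖toEuclideanLin A y‖ := by
    refine mul_norm_le_norm_apply_of_coercive _ fun y => ?_
    rw [← WithLp.toLp_ofLp 2 y, norm_toLp_eq_vnorm, vnorm_sq,
      EuclideanSpace.inner_eq_star_dotProduct, dotProduct_comm]
    exact h _
  have hinj : Function.Injective (toEuclideanLin A) := by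
    refine (injective_iff_map_eq_zero _).mpr fun y hy => norm_eq_zero.mp ?_
    have := hlow y
    rw [hy, norm_zero] at this
    exact le_antisymm (nonpos_of_mul_nonpos_right this hc) (norm_nonneg y)
  have hA : IsUnit A := mulVec_injective_iff_isUnit.mp fun x x' hxx' =>
    WithLp.toLp_injective 2 (hinj (congrArg (WithLp.toLp 2) hxx'))
  refine ⟨hA, ContinuousLinearMap.opNorm_le_bound _ (by positivity) fun y => ?_⟩
  have hright : toEuclideanLin A (toEuclideanLin A⁻¹ y) = y := by
    rw [← LinearMap.comp_apply, ← toLpLin_mul, mul_nonsing_inv A ((isUnit_iff_isUnit_det A).mp hA),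
      toLpLin_one, LinearMap.id_apply]
  have := hlow (toEuclideanLin A⁻¹ y)
  rw [hright] at this
  rwa [one_div_mul_eq_div, le_div_iff₀ hc, mul_comm]

section Gram

variable {m N d K : ℕ} (B : Matrix (Fin m) (Fin N × Fin d) ℂ)

theorem gram_blk_apply_self (hcol : ∀ j, ∑ r, Complex.normSq (B r j) = 1) (n : Fin N) (i : Fin d) :
    ((blk B n)ᴴ * blk B n) i i = 1 := by
  simp only [mul_apply, conjTranspose_apply, blk, of_apply, Complex.star_def,
    ← Complex.normSq_eq_conj_mul_self, ← Complex.ofReal_sum, hcol, Complex.ofReal_one]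

theorem le_re_star_dotProduct_gram_mulVec {ν μB : ℝ}
    (hcol : ∀ j, ∑ r, Complex.normSq (B r j) = 1)
    (hν : ∀ n : Fin N, ∀ i j : Fin d, i ≠ j → ‖((blk B n)ᴴ * blk B n) i j‖ ≤ ν)
    (hμ : ∀ n n' : Fin N, n ≠ n' → specNorm ((blk B n)ᴴ * blk B n') ≤ d * μB)
    {S : Fin K → Fin N} (hS : Function.Injective S) (x : Fin K × Fin d → ℂ) :
    (1 - ((d : ℝ) - 1) * ν - ((K : ℝ) - 1) * d * μB) * ∑ j, Complex.normSq (x j) ≤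
      (star x ⬝ᵥ (((subMat B S)ᴴ * subMat B S) *ᵥ x)).re := by
  set M : Fin K → Fin K → Matrix (Fin d) (Fin d) ℂ := fun k k' => (blk B (S k))ᴴ * blk B (S k')
  have hdiag : (1 - ((d : ℝ) - 1) * ν) * ∑ j, Complex.normSq (x j) ≤
      ∑ k, (star (Function.curry x k) ⬝ᵥ (M k k *ᵥ Function.curry x k)).re := by
    rw [Fintype.sum_prod_type, mul_sum]
    exact sum_le_sum fun k _ => by
      simpa using le_re_star_dotProduct_mulVec_of_diag_eq_one
        (gram_blk_apply_self B hcol (S k)) (hν (S k)) (Function.curry x k)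
  have hnorms : ∑ k, vnorm (Function.curry x k) ^ 2 = ∑ j, Complex.normSq (x j) := by
    simp only [vnorm_sq, Function.curry_apply, Fintype.sum_prod_type]
  have hoff := sum_re_sub_le_re_sum_sum
    (fun k k' => star (Function.curry x k) ⬝ᵥ (M k k' *ᵥ Function.curry x k'))
    (fun _ _ _ => norm_nonneg _) (fun k k' hkk' => hμ _ _ (hS.ne hkk'))
    (a := fun k => vnorm (Function.curry x k)) (fun _ => Real.sqrt_nonneg _)
    fun _ _ _ => norm_star_dotProduct_mulVec_le _ _ _
  rw [Fintype.card_fin, hnorms] at hoff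
  rw [dotProduct_mulVec_prod]
  -- the `(k, k')` block of `(subMat B S)ᴴ * subMat B S` is `M k k'` by definition
  change _ ≤ (∑ k, ∑ k', star (Function.curry x k) ⬝ᵥ (M k k' *ᵥ Function.curry x k')).re
  linarith

end Gram

/-- if `1 − (d−1)ν − (K−1)d·μB > 0` then the Gram matrix
`B_Sᴴ B_S` is invertible and `‖(B_Sᴴ B_S)⁻¹‖ ≤ 1/(1 − (d−1)ν − (K−1)d·μB)`. -/
theorem gram_invertible_and_inverse_bound
    (m N d K : ℕ) (B : Matrix (Fin m) (Fin N × Fin d) ℂ) (ν μB : ℝ)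
    (hcol : ∀ j, ∑ r, Complex.normSq (B r j) = 1)
    (hν : ∀ n : Fin N, ∀ i j : Fin d, i ≠ j → ‖((blk B n)ᴴ * blk B n) i j‖ ≤ ν)
    (hμ : ∀ n n' : Fin N, n ≠ n' → specNorm ((blk B n)ᴴ * blk B n') ≤ d * μB)
    (S : Fin K → Fin N) (hS : Function.Injective S)
    (hc : 0 < 1 - ((d : ℝ) - 1) * ν - ((K : ℝ) - 1) * d * μB) :
    IsUnit ((subMat B S)ᴴ * subMat B S) ∧
      specNorm ((subMat B S)ᴴ * subMat B S)⁻¹ ≤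
        1 / (1 - ((d : ℝ) - 1) * ν - ((K : ℝ) - 1) * d * μB) :=
  isUnit_and_specNorm_inv_le_of_coercive _ hc (le_re_star_dotProduct_gram_mulVec B hcol hν hμ hS)
end

section
/- Let B ∈ ℂ^{m×Nd} be partitioned into blocks B₁,…,B_N of d columns, with unit-norm columns, sub-coherence ν, and block-coherence μ_B. For s supported on block set I, ‖B_iᴴ B s‖₂ ≥ [1 − (d−1)ν]·‖s_i‖₂ − (|I|−1)·d·μ_B·max_{k∈I}‖s_k‖₂ for any i ∈ I, and ‖B_jᴴ B s‖₂ ≤ |I|·d·μ_B·max_{k∈I}‖s_k‖₂ for any j ∉ I. -/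
/-!
Write `B_iᴴ B s = ∑_{k ∈ I} (B_iᴴ B_k) s_k`. Each cross term `k ≠ i` has norm at most
`‖B_iᴴ B_k‖ ‖s_k‖ ≤ d μ_B su`. The diagonal Gram block `B_iᴴ B_i` is the identity plus a matrix
with zero diagonal and entries of modulus at most `ν`; Cauchy–Schwarz along each row bounds that
perturbation by `(d - 1) ν`, and the reverse triangle inequality gives the lower bound.
-/

open Matrix Finset

section EuclideanNorm

variable {α β κ : Type*} [Fintype α]

lemma vnorm_eq_norm_toLp (v : α → ℂ) : vnorm v = ‖WithLp.toLp 2 v‖ := by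
  simp [vnorm, EuclideanSpace.norm_eq, Complex.normSq_eq_norm_sq]

lemma vnorm_sq_s14 (v : α → ℂ) : vnorm v ^ 2 = ∑ i, ‖v i‖ ^ 2 := by
  simp [vnorm_eq_norm_toLp, EuclideanSpace.norm_sq_eq]

lemma vnorm_nonneg (v : α → ℂ) : 0 ≤ vnorm v := Real.sqrt_nonneg _

lemma vnorm_sum_le (T : Finset κ) (f : κ → α → ℂ) :
    vnorm (∑ k ∈ T, f k) ≤ ∑ k ∈ T, vnorm (f k) := by
  simp only [vnorm_eq_norm_toLp, WithLp.toLp_sum]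
  exact norm_sum_le _ _

lemma vnorm_sub_le_vnorm_add (x y : α → ℂ) : vnorm x - vnorm y ≤ vnorm (x + y) := by
  simpa [vnorm_eq_norm_toLp] using norm_sub_norm_le (WithLp.toLp 2 x) (WithLp.toLp 2 (-y))

lemma vnorm_mulVec_le [Fintype β] [DecidableEq β] (A : Matrix α β ℂ) (x : β → ℂ) :
    vnorm (A *ᵥ x) ≤ specNorm A * vnorm x := by
  simpa [vnorm_eq_norm_toLp, specNorm, Matrix.toLpLin_toLp] using
    (Matrix.toEuclideanLin A).toContinuousLinearMap.le_opNorm (WithLp.toLp 2 x)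

lemma vnorm_sum_mulVec_le [Fintype β] [DecidableEq β] (T : Finset κ) (A : κ → Matrix α β ℂ)
    (x : κ → β → ℂ) {c r : ℝ} (hA : ∀ k ∈ T, specNorm (A k) ≤ c)
    (hx : ∀ k ∈ T, vnorm (x k) ≤ r) :
    vnorm (∑ k ∈ T, A k *ᵥ x k) ≤ T.card * (c * r) := by
  refine (vnorm_sum_le T _).trans ?_
  rw [← nsmul_eq_mul]
  refine sum_le_card_nsmul T _ _ fun k hk => (vnorm_mulVec_le (A k) (x k)).trans ?_
  exact mul_le_mul (hA k hk) (hx k hk) (vnorm_nonneg _) ((norm_nonneg _).trans (hA k hk))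

end EuclideanNorm

section OffDiagonal

variable {ι : Type*} [Fintype ι] [DecidableEq ι]

lemma sum_sq_sum_erase_le (f : ι → ℝ) :
    ∑ i, (∑ j ∈ univ.erase i, f j) ^ 2 ≤ ((Fintype.card ι : ℝ) - 1) ^ 2 * ∑ i, f i ^ 2 := by
  have hrow : ∀ i, (∑ j ∈ univ.erase i, f j) ^ 2
      ≤ ((Fintype.card ι : ℝ) - 1) * (∑ j, f j ^ 2 - f i ^ 2) := by
    intro i
    have hcard : ((univ.erase i).card : ℝ) = Fintype.card ι - 1 := by
      rw [card_erase_of_mem (mem_univ i), card_univ, Nat.cast_pred (Fintype.card_pos_iff.2 ⟨i⟩)]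
    calc _ ≤ ((univ.erase i).card : ℝ) * ∑ j ∈ univ.erase i, f j ^ 2 := sq_sum_le_card_mul_sum_sq
      _ = _ := by rw [hcard, sum_erase_eq_sub (mem_univ i)]
  calc _ ≤ ∑ i, ((Fintype.card ι : ℝ) - 1) * (∑ j, f j ^ 2 - f i ^ 2) :=
        sum_le_sum fun i _ => hrow i
    _ = _ := by rw [← mul_sum, sum_sub_distrib, sum_const, card_univ, nsmul_eq_mul]; ring

variable {ν : ℝ}

lemma norm_mulVec_apply_le_of_offDiag {E : Matrix ι ι ℂ} (hdiag : ∀ i, E i i = 0)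
    (hoff : ∀ i j, i ≠ j → ‖E i j‖ ≤ ν) (x : ι → ℂ) (i : ι) :
    ‖(E *ᵥ x) i‖ ≤ ν * ∑ j ∈ univ.erase i, ‖x j‖ := by
  calc ‖(E *ᵥ x) i‖ = ‖∑ j ∈ univ.erase i, E i j * x j‖ := by
        rw [mulVec, dotProduct, ← add_sum_erase _ _ (mem_univ i), hdiag, zero_mul, zero_add]
    _ ≤ ∑ j ∈ univ.erase i, ‖E i j‖ * ‖x j‖ := norm_sum_le_of_le _ fun j _ => (norm_mul _ _).le
    _ ≤ ∑ j ∈ univ.erase i, ν * ‖x j‖ := sum_le_sum fun j hj =>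
        mul_le_mul_of_nonneg_right (hoff i j (ne_of_mem_erase hj).symm) (norm_nonneg _)
    _ = _ := (mul_sum ..).symm

lemma vnorm_mulVec_le_of_offDiag {E : Matrix ι ι ℂ} (hdiag : ∀ i, E i i = 0)
    (hoff : ∀ i j, i ≠ j → ‖E i j‖ ≤ ν) (x : ι → ℂ) :
    vnorm (E *ᵥ x) ≤ ((Fintype.card ι : ℝ) - 1) * ν * vnorm x := by
  rcases subsingleton_or_nontrivial ι with hι | _
  · have hEx : E *ᵥ x = 0 := funext fun i => by
      simp [mulVec, dotProduct, Subsingleton.elim _ i, hdiag]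
    rcases isEmpty_or_nonempty ι with _ | _
    · simp [vnorm]
    · have hcard : Fintype.card ι = 1 :=
        le_antisymm (Fintype.card_le_one_iff_subsingleton.2 hι) Fintype.card_pos
      simp [hEx, hcard, vnorm]
  · obtain ⟨i, j, hij⟩ := exists_pair_ne ι
    have hν : 0 ≤ ν := (norm_nonneg _).trans (hoff i j hij)
    have hcard : (0 : ℝ) ≤ Fintype.card ι - 1 := by
      simpa using (Nat.one_le_cast (α := ℝ)).2 Fintype.card_pos
    rw [← sq_le_sq₀ (vnorm_nonneg _) (mul_nonneg (mul_nonneg hcard hν) (vnorm_nonneg x)), mul_pow,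
      vnorm_sq_s14, vnorm_sq_s14]
    calc ∑ i, ‖(E *ᵥ x) i‖ ^ 2 ≤ ∑ i, (ν * ∑ j ∈ univ.erase i, ‖x j‖) ^ 2 :=
          sum_le_sum fun i _ =>
            pow_le_pow_left₀ (norm_nonneg _) (norm_mulVec_apply_le_of_offDiag hdiag hoff x i) 2
      _ = ν ^ 2 * ∑ i, (∑ j ∈ univ.erase i, ‖x j‖) ^ 2 := by simp_rw [mul_pow, mul_sum]
      _ ≤ ν ^ 2 * (((Fintype.card ι : ℝ) - 1) ^ 2 * ∑ i, ‖x i‖ ^ 2) :=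
          mul_le_mul_of_nonneg_left (sum_sq_sum_erase_le _) (sq_nonneg ν)
      _ = _ := by ring

lemma one_sub_mul_vnorm_le_vnorm_mulVec {G : Matrix ι ι ℂ} (hdiag : ∀ i, G i i = 1)
    (hoff : ∀ i j, i ≠ j → ‖G i j‖ ≤ ν) (x : ι → ℂ) :
    (1 - ((Fintype.card ι : ℝ) - 1) * ν) * vnorm x ≤ vnorm (G *ᵥ x) := by
  have hE : vnorm ((G - 1) *ᵥ x) ≤ ((Fintype.card ι : ℝ) - 1) * ν * vnorm x :=
    vnorm_mulVec_le_of_offDiag (fun i => by simp [hdiag])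
      (fun i j hij => by simpa [one_apply_ne hij] using hoff i j hij) x
  have hsplit : G *ᵥ x = x + (G - 1) *ᵥ x := by rw [sub_mulVec, one_mulVec]; abel
  have htriangle := vnorm_sub_le_vnorm_add x ((G - 1) *ᵥ x)
  rw [← hsplit] at htriangle
  linarith

end OffDiagonal

section Blocks

variable {m N d : ℕ} (B : Matrix (Fin m) (Fin N × Fin d) ℂ)

lemma gram_blk_diag_eq_one (hcol : ∀ j, ∑ r, Complex.normSq (B r j) = 1) (n : Fin N)
    (c : Fin d) : ((blk B n)ᴴ * blk B n) c c = 1 := by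
  simp only [mul_apply, conjTranspose_apply, blk, of_apply, Complex.star_def,
    ← Complex.normSq_eq_conj_mul_self]
  exact_mod_cast hcol (n, c)

variable {I : Finset (Fin N)} {s : Fin N × Fin d → ℂ}

lemma mulVec_eq_sum_blk_mulVec (hsupp : ∀ p : Fin N × Fin d, p.1 ∉ I → s p = 0) :
    B *ᵥ s = ∑ k ∈ I, blk B k *ᵥ fun c => s (k, c) := by
  funext r
  rw [Finset.sum_apply]
  simp only [mulVec, dotProduct, blk, of_apply, Fintype.sum_prod_type]
  refine (sum_subset (subset_univ I) fun k _ hk => ?_).symm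
  exact sum_eq_zero fun c _ => by rw [hsupp (k, c) hk, mul_zero]

lemma blk_conjTranspose_mulVec_mulVec_eq_sum (hsupp : ∀ p : Fin N × Fin d, p.1 ∉ I → s p = 0)
    (n : Fin N) :
    (blk B n)ᴴ *ᵥ (B *ᵥ s) = ∑ k ∈ I, ((blk B n)ᴴ * blk B k) *ᵥ fun c => s (k, c) := by
  simp_rw [mulVec_eq_sum_blk_mulVec B hsupp, mulVec_sum, mulVec_mulVec]

end Blocks

/-- correlation bounds for blocks inside and outside the support:
for `i ∈ I`, `‖B_iᴴ B s‖₂ ≥ [1−(d−1)ν]‖s_i‖₂ − (|I|−1)dμ_B·max_{k∈I}‖s_k‖₂`,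
and for `j ∉ I`, `‖B_jᴴ B s‖₂ ≤ |I|dμ_B·max_{k∈I}‖s_k‖₂`
(stated with `su` any upper bound of the block norms `‖s_k‖₂`, `k ∈ I`). -/
theorem block_correlation_bounds
    (m N d : ℕ) (B : Matrix (Fin m) (Fin N × Fin d) ℂ) (ν μB su : ℝ)
    (hcol : ∀ j, ∑ r, Complex.normSq (B r j) = 1)
    (hν : ∀ n : Fin N, ∀ i j : Fin d, i ≠ j → ‖((blk B n)ᴴ * blk B n) i j‖ ≤ ν)
    (hμ : ∀ n n' : Fin N, n ≠ n' → specNorm ((blk B n)ᴴ * blk B n') ≤ d * μB)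
    (I : Finset (Fin N)) (s : Fin N × Fin d → ℂ)
    (hsupp : ∀ p : Fin N × Fin d, p.1 ∉ I → s p = 0)
    (hsu : ∀ n ∈ I, vnorm (fun c => s (n, c)) ≤ su) :
    (∀ i ∈ I,
      (1 - ((d : ℝ) - 1) * ν) * vnorm (fun c => s (i, c)) -
          ((I.card : ℝ) - 1) * d * μB * su ≤
        vnorm ((blk B i)ᴴ.mulVec (B.mulVec s))) ∧
    (∀ j ∉ I,
      vnorm ((blk B j)ᴴ.mulVec (B.mulVec s)) ≤ (I.card : ℝ) * d * μB * su) := by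
  refine ⟨fun i hi => ?_, fun j hj => ?_⟩
  · have hdiag := one_sub_mul_vnorm_le_vnorm_mulVec (gram_blk_diag_eq_one B hcol i) (hν i)
      (fun c => s (i, c))
    have hcross := vnorm_sum_mulVec_le (I.erase i) (fun k => (blk B i)ᴴ * blk B k)
      (fun k c => s (k, c)) (fun k hk => hμ i k (ne_of_mem_erase hk).symm)
      (fun k hk => hsu k (mem_of_mem_erase hk))
    rw [card_erase_of_mem hi, Nat.cast_pred (card_pos.2 ⟨i, hi⟩)] at hcross
    rw [Fintype.card_fin] at hdiag
    rw [blk_conjTranspose_mulVec_mulVec_eq_sum B hsupp, ← add_sum_erase I _ hi]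
    have htriangle := vnorm_sub_le_vnorm_add (((blk B i)ᴴ * blk B i) *ᵥ fun c => s (i, c))
      (∑ k ∈ I.erase i, ((blk B i)ᴴ * blk B k) *ᵥ fun c => s (k, c))
    linarith
  · rw [blk_conjTranspose_mulVec_mulVec_eq_sum B hsupp]
    calc _ ≤ I.card * (d * μB * su) := vnorm_sum_mulVec_le I (fun k => (blk B j)ᴴ * blk B k) _
          (fun k hk => hμ j k (ne_of_mem_of_not_mem hk hj).symm) hsu
      _ = _ := by ring
end
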